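/- arXiv:1907.03143 — 4 statements merged into one kernel-verified Lean document; each statement's English description precedes it below -/
import Mathlib

section
/- Let V (entities), R (relations) be finite nonempty sets and let T be a finite set of real numbers (timestamps). For any subset W of V × R × V × T (the true tuples), there exist a dimension d ∈ ℕ, vectors a⃗_v, w⃗_v, b⃗_v, a⃖_v, w⃖_v, b⃖_v ∈ ℝ^d for every entity v ∈ V, and vectors z⃗_r, z⃖_r ∈ ℝ^d for every relation r ∈ R, such that, defining for every v ∈ V and t ∈ T the head vector ż_v^t ∈ ℝ^d by ż_v^t[n] = a⃗_v[n]·sin(w⃗_v[n]·t + b⃗_v[n]) and the tail vector z̈_v^t ∈ ℝ^d by z̈_v^t[n] = a⃖_v[n]·sin(w⃖_v[n]·t + b⃖_v[n]), the DE-SimplE score φ(v,r,u,t) = (1/2)·(Σ_{n=1}^{d} ż_v^t[n]·z⃗_r[n]·z̈_u^t[n] + Σ_{n=1}^{d} ż_u^t[n]·z⃖_r[n]·z̈_v^t[n]) satisfies φ(v,r,u,t) > 0 whenever (v,r,u,t) ∈ W and φ(v,r,u,t) < 0 whenever (v,r,u,t) ∉ W. -/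
open Real Finset

namespace DESimple

variable (T : Finset ℝ)

def sinSet : Set (↥T → ℝ) := {f | ∃ w b : ℝ, ∀ t : ↥T, f t = Real.sin (w * (t : ℝ) + b)}

lemma span_closed : IsClosed ((Submodule.span ℝ (sinSet T)) : Set (↥T → ℝ)) :=
  Submodule.closed_of_finiteDimensional _

lemma mem_of_deriv {g : ℝ → (↥T → ℝ)} {d : ↥T → ℝ} {w : ℝ}
    (hg : ∀ x, g x ∈ Submodule.span ℝ (sinSet T)) (hd : HasDerivAt g d w) :
    d ∈ Submodule.span ℝ (sinSet T) := by
  have h := hasDerivAt_iff_tendsto_slope.1 hd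
  refine (span_closed T).mem_of_tendsto h ?_
  filter_upwards with y
  exact Submodule.smul_mem _ _ (Submodule.sub_mem _ (hg y) (hg w))

lemma pow_mem : ∀ (m : ℕ) (w : ℝ),
    (fun t : ↥T => (t:ℝ)^m * Real.sin (w * t)) ∈ Submodule.span ℝ (sinSet T) ∧
    (fun t : ↥T => (t:ℝ)^m * Real.cos (w * t)) ∈ Submodule.span ℝ (sinSet T) := by
  intro m
  induction m with
  | zero =>
    intro w
    constructor
    · exact Submodule.subset_span ⟨w, 0, fun t => by simp⟩
    · exact Submodule.subset_span ⟨w, Real.pi/2, fun t => by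
        simp [Real.sin_add_pi_div_two]⟩
  | succ m ih =>
    intro w
    have hds : ∀ w' : ℝ, HasDerivAt (fun x : ℝ => (fun t : ↥T => (t:ℝ)^m * Real.sin (x * t)))
        (fun t : ↥T => (t:ℝ)^(m+1) * Real.cos (w' * t)) w' := by
      intro w'
      rw [hasDerivAt_pi]
      intro t
      have h : HasDerivAt (fun x : ℝ => (t:ℝ)^m * Real.sin (x * t))
          ((t:ℝ)^m * (Real.cos (w' * t) * t)) w' :=
        ((Real.hasDerivAt_sin (w' * t)).comp w' (hasDerivAt_mul_const (t:ℝ))).const_mul _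
      have he : (t:ℝ)^(m+1) * Real.cos (w' * t) = (t:ℝ)^m * (Real.cos (w' * t) * t) := by ring
      rw [he]; exact h
    have hdc : ∀ w' : ℝ, HasDerivAt (fun x : ℝ => (fun t : ↥T => (t:ℝ)^m * Real.cos (x * t)))
        (fun t : ↥T => -((t:ℝ)^(m+1) * Real.sin (w' * t))) w' := by
      intro w'
      rw [hasDerivAt_pi]
      intro t
      have h : HasDerivAt (fun x : ℝ => (t:ℝ)^m * Real.cos (x * t))
          ((t:ℝ)^m * (-Real.sin (w' * t) * t)) w' :=
        ((Real.hasDerivAt_cos (w' * t)).comp w' (hasDerivAt_mul_const (t:ℝ))).const_mul _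
      have he : -((t:ℝ)^(m+1) * Real.sin (w' * t)) = (t:ℝ)^m * (-Real.sin (w' * t) * t) := by ring
      rw [he]; exact h
    constructor
    · have := mem_of_deriv T (fun x => (ih x).2) (hdc w)
      have h2 := Submodule.neg_mem _ this
      have he : -(fun t : ↥T => -((t:ℝ)^(m+1) * Real.sin (w * t)))
          = fun t : ↥T => (t:ℝ)^(m+1) * Real.sin (w * t) := by
        funext t; simp
      rwa [he] at h2
    · exact mem_of_deriv T (fun x => (ih x).1) (hds w)

lemma all_mem (f : ↥T → ℝ) : f ∈ Submodule.span ℝ (sinSet T) := by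
  classical
  set p := Lagrange.interpolate T id (fun x => if h : x ∈ T then f ⟨x, h⟩ else 0) with hp
  have hev : ∀ t : ↥T, f t = p.eval (t:ℝ) := by
    intro t
    rw [hp]
    rw [show ((t:ℝ)) = id (t:ℝ) from rfl, Lagrange.eval_interpolate_at_node _
      (Function.injective_id.injOn) t.2]
    simp [t.2]
  have hfe : f = ∑ k ∈ Finset.range (p.natDegree + 1),
      p.coeff k • (fun t : ↥T => (t:ℝ)^k) := by
    funext t
    rw [hev t, Polynomial.eval_eq_sum_range]
    simp [Finset.sum_apply, smul_eq_mul]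
  rw [hfe]
  refine Submodule.sum_mem _ fun k _ => Submodule.smul_mem _ _ ?_
  have h0 : (fun t : ↥T => (t:ℝ)^k) = fun t : ↥T => (t:ℝ)^k * Real.cos (0 * t) := by
    funext t; simp
  rw [h0]
  exact (pow_mem T k 0).2

end DESimple

/-- **Full expressiveness of DE-SimplE** (Theorem 1 of the paper).
For finite nonempty entity set `V`, relation set `R`, and a finite set `T` of real
timestamps, for any set `W` of true tuples there exist a dimension `d`, sinusoidal
diachronic entity embeddings (head and tail), and static relation embeddings such
that the DE-SimplE score is positive exactly on `W` and negative on its complement. -/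
theorem de_simple_fully_expressive
    (V R : Type) [Fintype V] [Nonempty V] [Fintype R] [Nonempty R]
    (T : Finset ℝ) (W : Set (V × R × V × ℝ)) :
    ∃ (d : ℕ) (ah wh bh at' wt bt : V → Fin d → ℝ) (zf zb : R → Fin d → ℝ),
      ∀ (v u : V) (r : R), ∀ t ∈ T,
        (((v, r, u, t) ∈ W →
          0 < (1 / 2 : ℝ) *
            ((∑ n, (ah v n * Real.sin (wh v n * t + bh v n)) * zf r n *
                (at' u n * Real.sin (wt u n * t + bt u n))) +
             (∑ n, (ah u n * Real.sin (wh u n * t + bh u n)) * zb r n *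
                (at' v n * Real.sin (wt v n * t + bt v n))))) ∧
         ((v, r, u, t) ∉ W →
          (1 / 2 : ℝ) *
            ((∑ n, (ah v n * Real.sin (wh v n * t + bh v n)) * zf r n *
                (at' u n * Real.sin (wt u n * t + bt u n))) +
             (∑ n, (ah u n * Real.sin (wh u n * t + bh u n)) * zb r n *
                (at' v n * Real.sin (wt v n * t + bt v n)))) < 0)) := by
  classical
  have hf : ∀ x : V × R × V, ∃ (n : ℕ) (c : Fin n → ℝ) (g : Fin n → DESimple.sinSet T),
      (∑ i, c i • (g i : ↥T → ℝ)) =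
        fun t : ↥T => if (x.1, x.2.1, x.2.2, (t:ℝ)) ∈ W then 1 else -1 :=
    fun x => Submodule.mem_span_set'.1 (DESimple.all_mem T _)
  choose nn cc gg hgg using hf
  have hwb : ∀ (x : V × R × V) (j : Fin (nn x)), ∃ wb : ℝ × ℝ, ∀ t : ↥T,
      (gg x j : ↥T → ℝ) t = Real.sin (wb.1 * t + wb.2) := by
    intro x j
    obtain ⟨w, b, h⟩ := (gg x j).2
    exact ⟨(w, b), h⟩
  choose wb hwb' using hwb
  obtain e : Fin (Fintype.card ((x : V × R × V) × Fin (nn x))) ≃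
      ((x : V × R × V) × Fin (nn x)) :=
    (Fintype.equivFin _).symm
  refine ⟨Fintype.card ((x : V × R × V) × Fin (nn x)),
    (fun v k => if v = (e k).1.1 then 1 else 0),
    (fun _ k => (wb (e k).1 (e k).2).1),
    (fun _ k => (wb (e k).1 (e k).2).2),
    (fun u k => if u = (e k).1.2.2 then 1 else 0),
    (fun _ _ => 0),
    (fun _ _ => Real.pi / 2),
    (fun r k => if r = (e k).1.2.1 then 2 * cc (e k).1 (e k).2 else 0),
    (fun _ _ => 0),
    ?_⟩
  intro v u r t ht
  have hback : (∑ k : Fin (Fintype.card ((x : V × R × V) × Fin (nn x))),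
      ((if u = (e k).1.1 then (1:ℝ) else 0) * Real.sin ((wb (e k).1 (e k).2).1 * t +
        (wb (e k).1 (e k).2).2)) * 0 *
      ((if v = (e k).1.2.2 then (1:ℝ) else 0) * Real.sin (0 * t + Real.pi / 2))) = 0 := by
    simp
  have hfor : (∑ k : Fin (Fintype.card ((x : V × R × V) × Fin (nn x))),
      ((if v = (e k).1.1 then (1:ℝ) else 0) * Real.sin ((wb (e k).1 (e k).2).1 * t +
        (wb (e k).1 (e k).2).2)) *
      (if r = (e k).1.2.1 then 2 * cc (e k).1 (e k).2 else 0) *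
      ((if u = (e k).1.2.2 then (1:ℝ) else 0) * Real.sin (0 * t + Real.pi / 2)))
      = 2 * (if (v, r, u, t) ∈ W then 1 else -1) := by
    rw [Equiv.sum_comp e (fun i : (x : V × R × V) × Fin (nn x) =>
      ((if v = i.1.1 then (1:ℝ) else 0) * Real.sin ((wb i.1 i.2).1 * t + (wb i.1 i.2).2)) *
      (if r = i.1.2.1 then 2 * cc i.1 i.2 else 0) *
      ((if u = i.1.2.2 then (1:ℝ) else 0) * Real.sin (0 * t + Real.pi / 2)))]
    rw [← Finset.univ_sigma_univ, Finset.sum_sigma]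
    have hxe : ∀ (x : V × R × V) (j : Fin (nn x)),
        ((if v = x.1 then (1:ℝ) else 0) * Real.sin ((wb x j).1 * t + (wb x j).2)) *
        (if r = x.2.1 then 2 * cc x j else 0) *
        ((if u = x.2.2 then (1:ℝ) else 0) * Real.sin (0 * t + Real.pi / 2))
        = (if x = (v, r, u) then
            2 * (cc x j * Real.sin ((wb x j).1 * t + (wb x j).2)) else 0) := by
      intro x j
      obtain ⟨v0, r0, u0⟩ := x
      by_cases hx : ((v0, r0, u0) : V × R × V) = (v, r, u)
      · obtain ⟨h1, h2, h3⟩ : v0 = v ∧ r0 = r ∧ u0 = u := by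
          simpa [Prod.ext_iff] using hx
        subst h1; subst h2; subst h3
        simp only [eq_self_iff_true, if_true, zero_mul, zero_add, Real.sin_pi_div_two]
        ring
      · rw [if_neg hx]
        have h : v ≠ v0 ∨ r ≠ r0 ∨ u ≠ u0 := by
          by_contra hc
          push_neg at hc
          exact hx (by simp [hc.1, hc.2.1, hc.2.2])
        rcases h with h | h | h <;> simp [h]
    simp only [hxe]
    rw [Finset.sum_eq_single_of_mem ((v, r, u) : V × R × V) (Finset.mem_univ _)]
    · simp only [eq_self_iff_true, if_true]
      rw [← Finset.mul_sum]
      have h2 : (∑ j, cc (v, r, u) j * Real.sin ((wb (v, r, u) j).1 * t + (wb (v, r, u) j).2))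
          = (if (v, r, u, t) ∈ W then (1:ℝ) else -1) := by
        have h3 := congrFun (hgg (v, r, u)) ⟨t, ht⟩
        simp only [Finset.sum_apply, Pi.smul_apply, smul_eq_mul] at h3
        rw [← h3]
        exact Finset.sum_congr rfl fun j _ => by rw [hwb']
      rw [h2]
    · intro x _ hx
      exact Finset.sum_eq_zero fun j _ => if_neg hx
  rw [hback, hfor]
  constructor
  · intro hw; rw [if_pos hw]; norm_num
  · intro hw; rw [if_neg hw]; norm_num
end

section
/- Let V and R be finite nonempty sets and let t_1, …, t_m be pairwise distinct real numbers (timestamps, indexed by p ∈ {1,…,m}). For any subset W of V × R × V × {1,…,m}, there exist a dimension d ∈ ℕ, vectors a⃗_v, w⃗_v, b⃗_v ∈ ℝ^d and a⃖_v ∈ ℝ^d for every v ∈ V, and a vector z_r ∈ ℝ^d for every r ∈ R, such that for all v, u ∈ V, r ∈ R, and p ∈ {1,…,m}: Σ_{n=1}^{d} a⃗_v[n]·sin(w⃗_v[n]·t_p + b⃗_v[n]) · z_r[n] · a⃖_u[n] = 1 if (v,r,u,p) ∈ W, and this sum equals −1 if (v,r,u,p) ∉ W. -/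
/-!
Sampled at distinct timestamps `t p`, the sinusoids `p ↦ sin (w * t p + b)` span `ℝ^m`: a
functional `c` vanishing on all of them also vanishes on `p ↦ t p * sin (w * t p + b)` (differentiate
in `w` after shifting the phase by `π / 2`), hence on every moment `p ↦ t p ^ j`, so `c = 0` by the
invertibility of the Vandermonde matrix. Any score pattern of one triple `(v, r, u)` over time is
thus a finite sum of sinusoids; giving every triple its own block of coordinates, carrying these
sinusoids in the head of `v` and indicators of the block in `r` and in the tail of `u`, realises
all patterns at once.
-/

open Classical Real Function

section Sinusoids

variable {ι : Type*} [Fintype ι]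

noncomputable def sinusoid (t : ι → ℝ) (w b : ℝ) : ι → ℝ := fun p => sin (w * t p + b)

lemma hasDerivAt_sum_mul_sin (t c : ι → ℝ) (b w : ℝ) :
    HasDerivAt (fun w => ∑ p, c p * sin (w * t p + b))
      (∑ p, c p * t p * cos (w * t p + b)) w := by
  refine HasDerivAt.fun_sum fun p _ => ?_
  have := (((hasDerivAt_id w).mul_const (t p)).add_const b).sin.const_mul (c p)
  simpa [mul_comm, mul_left_comm, mul_assoc] using this

lemma sum_mul_mul_sin_eq_zero (t : ι → ℝ) {c : ι → ℝ}
    (hc : ∀ w b, ∑ p, c p * sin (w * t p + b) = 0) (w b : ℝ) :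
    ∑ p, c p * t p * sin (w * t p + b) = 0 := by
  have hzero : (fun w => ∑ p, c p * sin (w * t p + (b - π / 2))) = fun _ => 0 :=
    funext fun w => hc w _
  have hderiv := (hasDerivAt_sum_mul_sin t c (b - π / 2) w).deriv
  rw [hzero, deriv_const] at hderiv
  simpa [← add_sub_assoc, cos_sub_pi_div_two] using hderiv.symm

lemma sum_mul_pow_eq_zero_of_sum_mul_sin_eq_zero (t : ι → ℝ) {c : ι → ℝ}
    (hc : ∀ w b, ∑ p, c p * sin (w * t p + b) = 0) (j : ℕ) :
    ∑ p, c p * t p ^ j = 0 := by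
  have hmoment : ∀ j : ℕ, ∀ w b, ∑ p, c p * t p ^ j * sin (w * t p + b) = 0 := by
    intro j
    induction j with
    | zero => simpa using hc
    | succ j ih => simpa [pow_succ, mul_assoc] using sum_mul_mul_sin_eq_zero t ih
  simpa using hmoment j 0 (π / 2)

end Sinusoids

section Timestamps

variable {m : ℕ} {t : Fin m → ℝ}

lemma eq_zero_of_forall_sum_mul_sin_eq_zero (ht : Injective t) {c : Fin m → ℝ}
    (hc : ∀ w b, ∑ p, c p * sin (w * t p + b) = 0) : c = 0 :=
  Matrix.eq_zero_of_forall_pow_sum_mul_pow_eq_zero ht fun j =>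
    sum_mul_pow_eq_zero_of_sum_mul_sin_eq_zero t hc j

lemma span_range_sinusoid_eq_top (ht : Injective t) :
    Submodule.span ℝ (Set.range (uncurry (sinusoid t))) = ⊤ := by
  rw [← Submodule.dualAnnihilator_eq_bot_iff, Submodule.eq_bot_iff]
  intro f hf
  rw [Submodule.mem_dualAnnihilator] at hf
  set c : Fin m → ℝ := fun p => f fun j => if p = j then 1 else 0
  have hfc : ∀ x, f x = ∑ p, c p * x p := fun x => by
    simp only [LinearMap.pi_apply_eq_sum_univ f x, smul_eq_mul, c, mul_comm]
  have hc : c = 0 := eq_zero_of_forall_sum_mul_sin_eq_zero ht fun w b => by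
    simpa [hfc, sinusoid] using hf _ (Submodule.subset_span ⟨(w, b), rfl⟩)
  exact LinearMap.ext fun x => by simp [hfc, hc]

lemma exists_sum_mul_sin_eq (ht : Injective t) (y : Fin m → ℝ) :
    ∃ (n : ℕ) (a w b : Fin n → ℝ), ∀ p, ∑ k, a k * sin (w k * t p + b k) = y p := by
  have hy : y ∈ Submodule.span ℝ (Set.range (uncurry (sinusoid t))) := by
    simp [span_range_sinusoid_eq_top ht]
  obtain ⟨n, a, g, hg⟩ := Submodule.mem_span_set'.mp hy
  choose wb hwb using fun k => (g k).2
  refine ⟨n, a, fun k => (wb k).1, fun k => (wb k).2, fun p => ?_⟩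
  simp [← hg, ← hwb, sinusoid, uncurry]

end Timestamps

lemma ite_mul_mul_ite_mul_ite {V R : Type*} [DecidableEq V] [DecidableEq R]
    (q : V × R × V) (v u : V) (r : R) (x s : ℝ) :
    (if q.1 = v then x else 0) * s * (if q.2.1 = r then 1 else 0) * (if q.2.2 = u then 1 else 0) =
      if q = (v, r, u) then x * s else 0 := by
  obtain ⟨v', r', u'⟩ := q
  split_ifs <;> simp_all

theorem exists_score_eq {V R : Type*} [Fintype V] [Fintype R] {m : ℕ} {t : Fin m → ℝ}
    (ht : Injective t) (y : V → R → V → Fin m → ℝ) :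
    ∃ (d : ℕ) (ah wh bh : V → Fin d → ℝ) (at' : V → Fin d → ℝ) (z : R → Fin d → ℝ),
      ∀ v u r p, ∑ n, ah v n * sin (wh v n * t p + bh v n) * z r n * at' u n = y v r u p := by
  choose n a w b hab using fun q : V × R × V => exists_sum_mul_sin_eq ht (y q.1 q.2.1 q.2.2)
  let e := (Fintype.equivFin (Σ q : V × R × V, Fin (n q))).symm
  refine ⟨_, fun v i => if (e i).1.1 = v then a (e i).1 (e i).2 else 0,
    fun _ i => w (e i).1 (e i).2, fun _ i => b (e i).1 (e i).2,
    fun u i => if (e i).1.2.2 = u then 1 else 0, fun r i => if (e i).1.2.1 = r then 1 else 0,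
    fun v u r p => ?_⟩
  calc _ = ∑ j : Σ q : V × R × V, Fin (n q),
        if j.1 = (v, r, u) then a j.1 j.2 * sin (w j.1 j.2 * t p + b j.1 j.2) else 0 :=
        Fintype.sum_equiv e _ _ fun i => ite_mul_mul_ite_mul_ite _ v u r _ _
    _ = ∑ k, a (v, r, u) k * sin (w (v, r, u) k * t p + b (v, r, u) k) := by
        simp [Fintype.sum_sigma]
    _ = y v r u p := hab _ p

theorem de_simple_special_case_expressive_general
    (V R : Type) [Fintype V] [Fintype R]
    (m : ℕ) (t : Fin m → ℝ) (ht : Function.Injective t)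
    (W : Set (V × R × V × Fin m)) :
    ∃ (d : ℕ) (ah wh bh : V → Fin d → ℝ) (at' : V → Fin d → ℝ) (z : R → Fin d → ℝ),
      ∀ (v u : V) (r : R) (p : Fin m),
        (∑ n, (ah v n * Real.sin (wh v n * t p + bh v n)) * z r n * at' u n) =
          if (v, r, u, p) ∈ W then 1 else -1 :=
  exists_score_eq ht fun v r u p => if (v, r, u, p) ∈ W then 1 else -1

/-- The special case of DE-SimplE's full-expressiveness construction from the appendix:
fully temporal sinusoidal head embeddings, static tail embeddings, one static vector
per relation; the single-component score can be made exactly `1` on true tuples and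
exactly `-1` on false tuples, at pairwise distinct timestamps `t 1, …, t m`. -/
theorem de_simple_special_case_expressive
    (V R : Type) [Fintype V] [Nonempty V] [Fintype R] [Nonempty R]
    (m : ℕ) (t : Fin m → ℝ) (ht : Function.Injective t)
    (W : Set (V × R × V × Fin m)) :
    ∃ (d : ℕ) (ah wh bh : V → Fin d → ℝ) (at' : V → Fin d → ℝ) (z : R → Fin d → ℝ),
      ∀ (v u : V) (r : R) (p : Fin m),
        (∑ n, (ah v n * Real.sin (wh v n * t p + bh v n)) * z r n * at' u n) =
          if (v, r, u, p) ∈ W then 1 else -1 :=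
  de_simple_special_case_expressive_general V R m t ht W
end

section
/- Let d ∈ ℕ and let ż, z̈ : V × ℝ → ℝ^d be arbitrary functions assigning to each entity v ∈ V and time t ∈ ℝ a head vector ż_v^t and a tail vector z̈_v^t. For a relation r with relation vectors z⃗_r, z⃖_r ∈ ℝ^d, define the score φ(v,r,u,t) = (1/2)·(Σ_{n=1}^{d} ż_v^t[n]·z⃗_r[n]·z̈_u^t[n] + Σ_{n=1}^{d} ż_u^t[n]·z⃖_r[n]·z̈_v^t[n]). If z⃗_r = z⃖_r, then for all entities v, u and all times t, φ(v,r,u,t) = φ(u,r,v,t). -/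
/-- Symmetry part of Proposition 1: if the two relation vectors are tied,
`z⃗_r = z⃖_r`, then the DE-SimplE score is symmetric in the two entities. -/
theorem de_simple_symmetry
    (V : Type) (d : ℕ) (zh zt : V → ℝ → Fin d → ℝ)
    (zf zb : Fin d → ℝ) (h : zf = zb) :
    ∀ (v u : V) (t : ℝ),
      (1 / 2 : ℝ) * ((∑ n, zh v t n * zf n * zt u t n) +
                     (∑ n, zh u t n * zb n * zt v t n)) =
      (1 / 2 : ℝ) * ((∑ n, zh u t n * zf n * zt v t n) +
                     (∑ n, zh v t n * zb n * zt u t n)) := by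
  subst h
  intro v u t
  ring
end

section
/- Let d ∈ ℕ and let ż, z̈ : V × ℝ → ℝ^d be functions assigning to each entity v ∈ V and time t ∈ ℝ a head vector ż_v^t and a tail vector z̈_v^t, such that every component of ż_v^t and of z̈_v^t is nonnegative for all v and t. Let r_i be a relation with relation vectors z⃗_{r_i}, z⃖_{r_i} ∈ ℝ^d, let δ⃗, δ⃖ ∈ ℝ^d be vectors with all components nonnegative, and let r_j be a relation with z⃗_{r_j} = z⃗_{r_i} + δ⃗ and z⃖_{r_j} = z⃖_{r_i} + δ⃖. Define the score φ(v,r,u,t) = (1/2)·(Σ_{n=1}^{d} ż_v^t[n]·z⃗_r[n]·z̈_u^t[n] + Σ_{n=1}^{d} ż_u^t[n]·z⃖_r[n]·z̈_v^t[n]). Then for all entities v, u and all times t, φ(v, r_j, u, t) ≥ φ(v, r_i, u, t). -/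
/-- Proposition 2 (entailment): with componentwise-nonnegative entity embeddings and
`z⃗_{r_j} = z⃗_{r_i} + δ⃗`, `z⃖_{r_j} = z⃖_{r_i} + δ⃖` for nonnegative `δ⃗, δ⃖`,
the DE-SimplE score for `r_j` dominates the score for `r_i`. -/
theorem de_simple_entailment
    (V : Type) (d : ℕ) (zh zt : V → ℝ → Fin d → ℝ)
    (hzh : ∀ (v : V) (t : ℝ) (n : Fin d), 0 ≤ zh v t n)
    (hzt : ∀ (v : V) (t : ℝ) (n : Fin d), 0 ≤ zt v t n)
    (zfi zbi δf δb zfj zbj : Fin d → ℝ)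
    (hδf : ∀ n, 0 ≤ δf n) (hδb : ∀ n, 0 ≤ δb n)
    (h1 : zfj = zfi + δf) (h2 : zbj = zbi + δb) :
    ∀ (v u : V) (t : ℝ),
      (1 / 2 : ℝ) * ((∑ n, zh v t n * zfi n * zt u t n) +
                     (∑ n, zh u t n * zbi n * zt v t n)) ≤
      (1 / 2 : ℝ) * ((∑ n, zh v t n * zfj n * zt u t n) +
                     (∑ n, zh u t n * zbj n * zt v t n)) := by
  intro v u t
  subst h1 h2
  gcongr (1/2 : ℝ) * (?_ + ?_) <;>
    apply Finset.sum_le_sum <;> intro n _ <;> simp only [Pi.add_apply] <;> nlinarith [hzh v t n, hzt u t n, hzh u t n, hzt v t n, hδf n, hδb n, mul_nonneg (hzh v t n) (hzt u t n), mul_nonneg (hzh u t n) (hzt v t n), mul_nonneg (mul_nonneg (hzh v t n) (hδf n)) (hzt u t n), mul_nonneg (mul_nonneg (hzh u t n) (hδb n)) (hzt v t n)]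
end
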